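/- arXiv:2201.02332 — 2 statements merged into one kernel-verified Lean document; each statement's English description precedes it below -/
import Mathlib

section
/- Let k be a fixed positive integer, and for each n let f_n: {1,...,n} → {1,...,n} be a function in which every value has at most k preimages. Then (number of permutations g of {1,...,n} with g(i) ≠ f_n(i) for all i)/n! → 1/e as n → ∞. -/
/-!
By inclusion–exclusion over the set `s` of positions where `g` agrees with `f`, the number of
`f`-derangements is `∑ₛ (-1)^|s| N(s)`, where `N(s) = (n - |s|)!` if `f` is injective on `s` and
`0` otherwise. If `f` were injective on every `s` this would be `n! ∑_{j ≤ n} (-1)^j / j!`, so the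
error is at most the total weight `(n - |s|)!/n!` of the sets `s` on which `f` is not injective.
Each such set contains a collision `a ≠ b`, `f a = f b`; there are at most `k n` collisions, and
the sets containing a given one have total weight at most `e (n - 2)!/n!`. Hence the error is
`O(k / n)`.
-/

open Filter

open Finset Equiv
open scoped Nat

theorem sum_powerset_pow_mul_factorial_div {β : Type*} (s : Finset β) (x : ℝ) :
    ∑ t ∈ s.powerset, x ^ #t * ((#s - #t)! / (#s)! : ℝ) =
      ∑ i ∈ range (#s + 1), x ^ i / i ! := by
  rw [sum_powerset_apply_card (fun j => x ^ j * ((#s - j)! / (#s)! : ℝ))]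
  refine sum_congr rfl fun i hi => ?_
  rw [nsmul_eq_mul, Nat.cast_choose ℝ (Nat.lt_succ_iff.1 (mem_range.1 hi))]
  field_simp

theorem Real.tendsto_sum_range_succ_pow_div_factorial (x : ℝ) :
    Tendsto (fun n => ∑ i ∈ range (n + 1), x ^ i / i !) atTop (nhds (Real.exp x)) := by
  rw [Real.exp_eq_exp_ℝ]
  exact (tendsto_add_atTop_iff_nat 1).2 (NormedSpace.expSeries_div_hasSum_exp x).tendsto_sum_nat

section

variable {α : Type*} [Fintype α] [DecidableEq α]

theorem card_perm_fixing (s : Finset α) :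
    #{g : Perm α | ∀ i ∈ s, g i = i} = (Fintype.card α - #s)! := by
  rw [← Fintype.card_subtype, ← card_compl, ← Fintype.card_coe sᶜ, ← Fintype.card_perm]
  refine Fintype.card_congr ((subtypeEquivRight fun g => ?_).trans
    (Perm.subtypeEquivSubtypePerm (· ∈ sᶜ)).symm)
  simp

theorem card_perm_eqOn_of_injOn {f : α → α} {s : Finset α} (hf : Set.InjOn f s) :
    #{g : Perm α | ∀ i ∈ s, g i = f i} = (Fintype.card α - #s)! := by
  obtain ⟨g₀, hg₀⟩ := Perm.exists_extending_pair ((↑) : s → α) (fun i => f i)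
    Subtype.val_injective hf.injective
  rw [← card_perm_fixing s]
  refine card_nbij' (g₀⁻¹ * ·) (g₀ * ·) ?_ ?_ (fun _ _ => by simp) (fun _ _ => by simp)
  · intro g hg
    simp only [coe_filter, mem_univ, true_and, Set.mem_ofPred_eq, Perm.mul_apply] at hg ⊢
    intro i hi
    rw [hg i hi, ← hg₀ ⟨i, hi⟩]; simp
  · intro g hg
    simp only [coe_filter, mem_univ, true_and, Set.mem_ofPred_eq, Perm.mul_apply] at hg ⊢
    intro i hi
    exact (congrArg g₀ (hg i hi)).trans (hg₀ ⟨i, hi⟩)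

theorem card_perm_eqOn_of_not_injOn {f : α → α} {s : Finset α} (hf : ¬ Set.InjOn f s) :
    #{g : Perm α | ∀ i ∈ s, g i = f i} = 0 := by
  refine card_eq_zero.2 (filter_eq_empty_iff.2 fun g _ hg => hf fun a ha b hb hab => ?_)
  exact g.injective (by rw [hg a ha, hg b hb, hab])

theorem card_perm_ne_eq_sum_powerset (f : α → α) :
    (#{g : Perm α | ∀ i, g i ≠ f i} : ℤ) =
      ∑ s ∈ (univ : Finset α).powerset,
        (-1 : ℤ) ^ #s * #{g : Perm α | ∀ i ∈ s, g i = f i} := by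
  convert inclusion_exclusion_card_inf_compl univ fun i => ({g : Perm α | g i = f i}) using 5
  · ext g; simp [mem_inf]
  · ext g; simp [mem_inf]

theorem card_perm_ne_div_factorial (f : α → α) :
    (#{g : Perm α | ∀ i, g i ≠ f i} : ℝ) / (Fintype.card α)! =
      ∑ s ∈ (univ : Finset α).powerset, if Set.InjOn f s then
        (-1) ^ #s * ((Fintype.card α - #s)! / (Fintype.card α)! : ℝ) else 0 := by
  have := congrArg (fun z : ℤ => (z : ℝ) / (Fintype.card α)!) (card_perm_ne_eq_sum_powerset f)
  push_cast at this
  rw [this, sum_div]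
  refine sum_congr rfl fun s _ => ?_
  split_ifs with hs
  · rw [card_perm_eqOn_of_injOn hs, mul_div_assoc]
  · simp [card_perm_eqOn_of_not_injOn hs]

theorem abs_card_perm_ne_div_sub_le (f : α → α) :
    |(#{g : Perm α | ∀ i, g i ≠ f i} : ℝ) / (Fintype.card α)! -
        ∑ i ∈ range (Fintype.card α + 1), (-1 : ℝ) ^ i / i !| ≤
      ∑ s ∈ (univ : Finset α).powerset.filter (fun s : Finset α => ¬ Set.InjOn f s),
        ((Fintype.card α - #s)! / (Fintype.card α)! : ℝ) := by
  rw [card_perm_ne_div_factorial, ← card_univ, ← sum_powerset_pow_mul_factorial_div,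
    sum_ite, sum_const_zero, add_zero,
    ← sum_filter_add_sum_filter_not univ.powerset (fun s : Finset α => Set.InjOn f s),
    sub_add_cancel_left, abs_neg]
  refine (abs_sum_le_sum_abs _ _).trans_eq (sum_congr rfl fun s _ => ?_)
  rw [abs_mul, abs_pow, abs_neg, abs_one, one_pow, one_mul, abs_of_nonneg (by positivity)]

def collisions (f : α → α) : Finset (α × α) := {p | p.1 ≠ p.2 ∧ f p.1 = f p.2}

theorem card_collisions_le {f : α → α} {k : ℕ} (hf : ∀ y, #{i | f i = y} ≤ k) :
    #(collisions f) ≤ k * Fintype.card α := by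
  refine card_le_mul_card_image_of_maps_to (f := Prod.fst) (fun _ _ => mem_univ _) k
    fun a _ => (card_le_card_of_injOn Prod.snd (fun p hp => ?_) fun p hp q hq hpq => ?_).trans
      (hf (f a))
  · simp only [collisions, coe_filter, mem_filter, mem_univ, true_and] at hp
    simp [← hp.2, hp.1.2]
  · simp only [collisions, coe_filter, mem_filter, mem_univ, true_and, Set.mem_ofPred_eq] at hp hq
    exact Prod.ext (hp.2.trans hq.2.symm) hpq

theorem sum_not_injOn_le_sum_collisions (f : α → α) {w : Finset α → ℝ} (hw : ∀ s, 0 ≤ w s) :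
    ∑ s ∈ (univ : Finset α).powerset.filter (fun s : Finset α => ¬ Set.InjOn f s), w s ≤
      ∑ p ∈ collisions f, ∑ s ∈ Icc {p.1, p.2} univ, w s := by
  have hcover : ∀ s ∈ (univ : Finset α).powerset.filter (fun s : Finset α => ¬ Set.InjOn f s),
      w s ≤ ∑ p ∈ collisions f, if {p.1, p.2} ⊆ s then w s else 0 := by
    intro s hs
    obtain ⟨a, ha, b, hb, hfab, hab⟩ : ∃ a ∈ s, ∃ b ∈ s, f a = f b ∧ a ≠ b := by
      simpa [Set.InjOn] using (mem_filter.1 hs).2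
    have hmem : (a, b) ∈ collisions f := by simp [collisions, hab, hfab]
    refine le_of_eq_of_le ?_ (single_le_sum (fun p _ => ?_) hmem)
    · simp [insert_subset_iff, ha, hb]
    · split_ifs <;> simp [hw]
  calc _ ≤ ∑ s ∈ (univ : Finset α).powerset,
        ∑ p ∈ collisions f, if {p.1, p.2} ⊆ s then w s else 0 :=
      (sum_le_sum hcover).trans (sum_le_sum_of_subset_of_nonneg (filter_subset _ _)
        fun s _ _ => sum_nonneg fun p _ => by split_ifs <;> simp [hw])
    _ = _ := by
      rw [sum_comm]
      refine sum_congr rfl fun p _ => ?_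
      rw [← sum_filter]
      congr 1
      ext s
      simp

theorem sum_Icc_factorial_div (u : Finset α) :
    ∑ s ∈ Icc u univ, ((Fintype.card α - #s)! / (Fintype.card α)! : ℝ) =
      (Fintype.card α - #u)! / (Fintype.card α)! *
        ∑ i ∈ range (Fintype.card α - #u + 1), (1 / i ! : ℝ) := by
  have hv : #(univ \ u) = Fintype.card α - #u := by rw [← compl_eq_univ_sdiff, card_compl]
  rw [Icc_eq_image_powerset (subset_univ u), sum_image, ← hv]
  · have := sum_powerset_pow_mul_factorial_div (univ \ u) 1
    simp only [one_pow, one_mul] at this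
    rw [← this, mul_sum]
    refine sum_congr rfl fun t ht => ?_
    rw [mem_powerset] at ht
    rw [card_union_of_disjoint (disjoint_of_subset_right ht disjoint_sdiff), hv,
      Nat.sub_add_eq]
    field_simp
  · intro t ht t' ht' h
    simp only [coe_powerset, Set.mem_preimage, Set.mem_powerset_iff, coe_subset] at ht ht'
    rw [← union_sdiff_cancel_left (disjoint_of_subset_right ht disjoint_sdiff),
      ← union_sdiff_cancel_left (disjoint_of_subset_right ht' disjoint_sdiff)]
    exact congrArg (· \ u) h

theorem sum_Icc_factorial_div_le (u : Finset α) :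
    ∑ s ∈ Icc u univ, ((Fintype.card α - #s)! / (Fintype.card α)! : ℝ) ≤
      Real.exp 1 * ((Fintype.card α - #u)! / (Fintype.card α)!) := by
  rw [sum_Icc_factorial_div, mul_comm]
  gcongr
  simpa using Real.sum_le_exp_of_nonneg zero_le_one (Fintype.card α - #u + 1)

theorem abs_card_perm_ne_div_sub_le_of_card_fiber_le {f : α → α} {k : ℕ}
    (hf : ∀ y, #{i | f i = y} ≤ k) (hα : 2 ≤ Fintype.card α) :
    |(#{g : Perm α | ∀ i, g i ≠ f i} : ℝ) / (Fintype.card α)! -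
        ∑ i ∈ range (Fintype.card α + 1), (-1 : ℝ) ^ i / i !| ≤
      Real.exp 1 * k / (Fintype.card α - 1) := by
  obtain ⟨m, hm⟩ : ∃ m, Fintype.card α = m + 2 := ⟨_, (Nat.sub_add_cancel hα).symm⟩
  have hpair : ∀ p ∈ collisions f, #({p.1, p.2} : Finset α) = 2 := fun p hp =>
    card_pair (mem_filter.1 hp).2.1
  calc _ ≤ ∑ p ∈ collisions f, ∑ s ∈ Icc {p.1, p.2} univ,
          ((Fintype.card α - #s)! / (Fintype.card α)! : ℝ) :=
        (abs_card_perm_ne_div_sub_le f).trans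
          (sum_not_injOn_le_sum_collisions f fun _ => by positivity)
    _ ≤ ∑ p ∈ collisions f, Real.exp 1 * ((Fintype.card α - 2)! / (Fintype.card α)! : ℝ) :=
        sum_le_sum fun p hp => (hpair p hp) ▸ sum_Icc_factorial_div_le _
    _ ≤ (k * Fintype.card α : ℕ) *
          (Real.exp 1 * ((Fintype.card α - 2)! / (Fintype.card α)!)) := by
        rw [sum_const, nsmul_eq_mul]
        gcongr
        exact card_collisions_le hf
    _ = Real.exp 1 * k / (Fintype.card α - 1) := by
        rw [hm, Nat.add_sub_cancel, Nat.factorial_succ, Nat.factorial_succ]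
        push_cast
        rw [show (m : ℝ) + 2 - 1 = m + 1 by ring]
        field_simp
        ring

end

theorem stmt_13_general (k : ℕ) (F : (n : ℕ) → Fin n → Fin n)
    (hF : ∀ (n : ℕ) (y : Fin n),
      (Finset.univ.filter fun i : Fin n => F n i = y).card ≤ k) :
    Tendsto
      (fun n : ℕ =>
        ((Finset.univ.filter fun g : Equiv.Perm (Fin n) => ∀ i, g i ≠ F n i).card : ℝ)
          / (Nat.factorial n))
      atTop (nhds (1 / Real.exp 1)) := by
  have herror : Tendsto (fun n : ℕ => Real.exp 1 * k / ((n : ℝ) - 1)) atTop (nhds 0) :=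
    tendsto_const_nhds.div_atTop
      (tendsto_atTop_add_const_right _ (-1) tendsto_natCast_atTop_atTop)
  have hclose : Tendsto (fun n : ℕ =>
      (#{g : Perm (Fin n) | ∀ i, g i ≠ F n i} : ℝ) / (n ! : ℝ) -
        ∑ i ∈ range (n + 1), (-1 : ℝ) ^ i / i !) atTop (nhds 0) := by
    refine squeeze_zero_norm' ?_ herror
    filter_upwards [eventually_ge_atTop 2] with n hn
    simpa using abs_card_perm_ne_div_sub_le_of_card_fiber_le (hF n) (by simpa using hn)
  simpa [Real.exp_neg] using hclose.add (Real.tendsto_sum_range_succ_pow_div_factorial (-1))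

/-- Theorem 1: for a fixed k ≥ 1 and any sequence of k-max functions
f_n : {1,...,n} → {1,...,n}, the fraction of permutations that are
f_n-derangements tends to 1/e. -/
theorem stmt_13 (k : ℕ) (hk : 0 < k) (F : (n : ℕ) → Fin n → Fin n)
    (hF : ∀ (n : ℕ) (y : Fin n),
      (Finset.univ.filter fun i : Fin n => F n i = y).card ≤ k) :
    Tendsto
      (fun n : ℕ =>
        ((Finset.univ.filter fun g : Equiv.Perm (Fin n) => ∀ i, g i ≠ F n i).card : ℝ)
          / (Nat.factorial n))
      atTop (nhds (1 / Real.exp 1)) :=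
  stmt_13_general k F hF
end

section
/- Let f: {1,...,n} → {1,...,n} be a 2-max function (every value has at most 2 preimages) with A elements in collision pairs. Then |D[f] - D(n)| ≤ (A/2)·(n-2)!, where D(n) is the number of derangements of {1,...,n}. -/
/-!
If `f i = f j = a` with `i ≠ j` and `y` is a value that `f` misses, redirect `f` at `i` to `y`.
Among the permutations `g` that avoid `f` off `i`, those with `g i = y` correspond, via
`g ↦ swap a y * g`, to those with `g i = a` and `g j ≠ y`; so the redirection changes `D[f]` by
the number of such `g` with `g i = a` and `g j = y`, which is at most `(n - 2)!`. Each
redirection removes the collision pair `{i, j}` and creates no new collision, so after at most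
`A / 2` of them `f` is a permutation `σ`, and `D[σ] = D(n)`.
-/

open Finset Function Equiv Nat

variable {α : Type*} [Fintype α] [DecidableEq α]

def avoidingPerms (f : α → α) : Finset (Perm α) := {g | ∀ i, g i ≠ f i}

def avoidingPermsOff (f : α → α) (i : α) : Finset (Perm α) := {g | ∀ k ≠ i, g k ≠ f k}

def collisionSet (f : α → α) : Finset α := {i | ∃ j, j ≠ i ∧ f j = f i}

lemma card_avoidingPerms_perm (σ : Perm α) :
    #(avoidingPerms σ) = numDerangements (Fintype.card α) := by
  rw [← card_derangements_eq_numDerangements, ← Fintype.card_coe]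
  refine Fintype.card_congr ((Equiv.mulLeft σ⁻¹).subtypeEquiv fun g => ?_)
  simp [avoidingPerms, derangements, Equiv.symm_apply_eq]

lemma card_perm_apply_eq_and_apply_eq_le {i j a b : α} (hij : i ≠ j) (hab : a ≠ b) :
    #{g : Perm α | g i = a ∧ g j = b} ≤ (Fintype.card α - 2)! := by
  let restrict (g : {g : Perm α // g i = a ∧ g j = b}) :
      ({i, j}ᶜ : Finset α) ↪ ({a, b}ᶜ : Finset α) :=
    ⟨fun k => ⟨g.1 k, by
      have hk := k.2
      simp only [mem_compl, mem_insert, mem_singleton, not_or] at hk ⊢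
      exact ⟨fun h => hk.1 (g.1.injective (h.trans g.2.1.symm)),
        fun h => hk.2 (g.1.injective (h.trans g.2.2.symm))⟩⟩,
     fun k l h => Subtype.ext (g.1.injective (congrArg Subtype.val h))⟩
  have restrict_injective : Injective restrict := by
    intro g g' h
    ext k
    by_cases hki : k = i
    · rw [hki, g.2.1, g'.2.1]
    by_cases hkj : k = j
    · rw [hkj, g.2.2, g'.2.2]
    exact congrArg Subtype.val (DFunLike.congr_fun h ⟨k, by simp [hki, hkj]⟩)
  rw [← Fintype.card_subtype]
  calc _ ≤ Fintype.card (({i, j}ᶜ : Finset α) ↪ ({a, b}ᶜ : Finset α)) :=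
        Fintype.card_le_of_injective restrict restrict_injective
    _ = (Fintype.card α - 2)! := by
        rw [Fintype.card_embedding_eq, Fintype.card_coe, Fintype.card_coe, card_compl, card_compl,
          card_pair hij, card_pair hab, descFactorial_self]

lemma avoidingPerms_update (f : α → α) (i v : α) :
    avoidingPerms (update f i v) = {g ∈ avoidingPermsOff f i | g i ≠ v} := by
  refine Finset.ext fun g => ?_
  simp only [avoidingPerms, avoidingPermsOff, mem_filter, mem_univ, true_and]
  constructor
  · intro h
    exact ⟨fun k hk => by simpa [update_of_ne hk] using h k, by simpa using h i⟩
  · rintro ⟨h, hi⟩ k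
    by_cases hk : k = i
    · simpa [hk] using hi
    · simpa [update_of_ne hk] using h k hk

lemma card_avoidingPerms_update_add (f : α → α) (i v : α) :
    #(avoidingPerms (update f i v)) + #{g ∈ avoidingPermsOff f i | g i = v}
      = #(avoidingPermsOff f i) := by
  rw [avoidingPerms_update, add_comm, card_filter_add_card_filter_not]

section Collision

variable {f : α → α} {i j y : α}

lemma eq_or_eq_of_card_fiber_le_two (h2 : #{k | f k = f i} ≤ 2) (hij : i ≠ j)
    (hfj : f j = f i) {k : α} (hk : f k = f i) : k = i ∨ k = j := by
  by_contra! hne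
  have : 2 < #{k | f k = f i} :=
    two_lt_card_iff.2 ⟨i, j, k, by simp, by simpa using hfj, by simpa using hk, hij,
      hne.1.symm, hne.2.symm⟩
  omega

lemma card_fiber_update_le_two (h2 : ∀ v, #{k | f k = v} ≤ 2) (hy : ∀ k, f k ≠ y) (v : α) :
    #{k | update f i y k = v} ≤ 2 := by
  by_cases hv : v = y
  · subst hv
    calc #{k | update f i v k = v} ≤ #{i} := card_le_card fun k hk => by
          by_contra hki
          simp_all [update_of_ne (mem_singleton.not.1 hki)]
      _ ≤ 2 := by simp
  · refine le_trans (card_le_card fun k hk => ?_) (h2 v)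
    by_cases hki : k = i <;> simp_all

omit [Fintype α] in
lemma swap_mul_apply_ne (hfiber : ∀ k, f k = f i → k = i ∨ k = j) (hy : ∀ k, f k ≠ y)
    {g : Perm α} (hg : ∀ k ≠ i, g k ≠ f k) (hgj : g j ≠ y) :
    ∀ k ≠ i, (swap (f i) y * g) k ≠ f k := by
  intro k hk
  rw [Perm.mul_apply]
  rcases eq_or_ne (g k) (f i) with hka | hka
  · rw [hka, swap_apply_left]
    exact (hy k).symm
  rcases eq_or_ne (g k) y with hky | hky
  · rw [hky, swap_apply_right]
    rintro hfk
    rcases hfiber k hfk.symm with rfl | rfl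
    exacts [hk rfl, hgj hky]
  · rw [swap_apply_of_ne_of_ne hka hky]
    exact hg k hk

variable (hij : i ≠ j) (hfj : f j = f i) (hfiber : ∀ k, f k = f i → k = i ∨ k = j)
  (hy : ∀ k, f k ≠ y)
include hij hfj hfiber hy

lemma card_collisionSet_update_add_two_le :
    #(collisionSet (update f i y)) + 2 ≤ #(collisionSet f) := by
  have hsub : collisionSet (update f i y) ⊆ collisionSet f \ {i, j} := by
    intro k hk
    simp only [collisionSet, mem_filter, mem_univ, true_and, mem_sdiff, mem_insert,
      mem_singleton, update_apply] at hk ⊢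
    grind
  have hpair : {i, j} ⊆ collisionSet f := by
    intro k hk
    simp only [collisionSet, mem_filter, mem_univ, true_and, mem_insert, mem_singleton] at hk ⊢
    grind
  have := card_le_card hpair
  have := card_le_card hsub
  rw [card_sdiff_of_subset hpair, card_pair hij] at *
  omega

lemma card_filter_apply_eq_eq_add :
    #{g ∈ avoidingPermsOff f i | g i = f i}
      = #{g ∈ avoidingPermsOff f i | g i = y}
        + #{g ∈ avoidingPermsOff f i | g i = f i ∧ g j = y} := by
  rw [← card_filter_add_card_filter_not (s := {g ∈ avoidingPermsOff f i | g i = f i}) (· j = y),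
    add_comm, filter_filter, filter_filter]
  congr 1
  refine card_nbij' (swap (f i) y * ·) (swap (f i) y * ·) ?_ ?_ ?_ ?_
  · intro g hg
    simp only [avoidingPermsOff, coe_filter, mem_filter, mem_univ, true_and] at hg ⊢
    obtain ⟨hg, hgi, hgj⟩ := hg
    refine ⟨swap_mul_apply_ne hfiber hy hg hgj, ?_⟩
    rw [Perm.mul_apply, hgi, swap_apply_left]
  · intro g hg
    simp only [avoidingPermsOff, coe_filter, mem_filter, mem_univ, true_and] at hg ⊢
    obtain ⟨hg, hgi⟩ := hg
    have hgj : g j ≠ y := hgi ▸ g.injective.ne hij.symm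
    refine ⟨swap_mul_apply_ne hfiber hy hg hgj, ?_, ?_⟩
    · rw [Perm.mul_apply, hgi, swap_apply_right]
    · rw [Perm.mul_apply, swap_apply_eq_iff, swap_apply_right, ← hfj]
      exact hg j hij.symm
  · intro g _; simp [← mul_assoc]
  · intro g _; simp [← mul_assoc]

lemma abs_card_avoidingPerms_sub_card_avoidingPerms_update_le :
    |(#(avoidingPerms f) : ℤ) - #(avoidingPerms (update f i y))| ≤ (Fintype.card α - 2)! := by
  have hf := card_avoidingPerms_update_add f i (f i)
  rw [update_eq_self] at hf
  have hf' := card_avoidingPerms_update_add f i y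
  have hswap := card_filter_apply_eq_eq_add hij hfj hfiber hy
  have hfixed : #{g ∈ avoidingPermsOff f i | g i = f i ∧ g j = y} ≤ (Fintype.card α - 2)! :=
    (card_le_card fun g => by simp +contextual [avoidingPermsOff]).trans
      (card_perm_apply_eq_and_apply_eq_le hij (hy i))
  rw [abs_le]
  constructor <;> omega

end Collision

theorem abs_card_avoidingPerms_sub_numDerangements_le (f : α → α)
    (h2 : ∀ v, #{k | f k = v} ≤ 2) :
    |(#(avoidingPerms f) : ℤ) - numDerangements (Fintype.card α)|
      ≤ (#(collisionSet f) / 2 : ℤ) * (Fintype.card α - 2)! := by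
  induction hA : #(collisionSet f) using Nat.strong_induction_on generalizing f with
  | _ A ih =>
  by_cases hf : Injective f
  · rw [show f = ⇑(Equiv.ofBijective f hf.bijective_of_finite) from rfl,
      card_avoidingPerms_perm, sub_self, abs_zero]
    positivity
  obtain ⟨i, j, hfij, hij⟩ := not_injective_iff.1 hf
  obtain ⟨y, hy⟩ : ∃ y, ∀ k, f k ≠ y := by
    simpa [Surjective] using mt Finite.injective_iff_surjective.2 hf
  have hfiber : ∀ k, f k = f i → k = i ∨ k = j :=
    fun _ => eq_or_eq_of_card_fiber_le_two (h2 (f i)) hij hfij.symm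
  have hcoll := card_collisionSet_update_add_two_le hij hfij.symm hfiber hy
  have hstep := abs_card_avoidingPerms_sub_card_avoidingPerms_update_le hij hfij.symm hfiber hy
  have ih' := ih _ (by omega) (update f i y) (card_fiber_update_le_two h2 hy) rfl
  have hdiv : (#(collisionSet (update f i y)) / 2 + 1 : ℤ) ≤ A / 2 := by omega
  calc _ ≤ |(#(avoidingPerms f) : ℤ) - #(avoidingPerms (update f i y))|
        + |(#(avoidingPerms (update f i y)) : ℤ) - numDerangements (Fintype.card α)| :=
        abs_sub_le _ _ _
    _ ≤ (Fintype.card α - 2)! + #(collisionSet (update f i y)) / 2 * (Fintype.card α - 2)! :=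
        add_le_add hstep ih'
    _ = (#(collisionSet (update f i y)) / 2 + 1 : ℤ) * (Fintype.card α - 2)! := by ring
    _ ≤ A / 2 * (Fintype.card α - 2)! := by gcongr

/-- For a 2-max function f on {1,...,n} with A elements in collision pairs,
|D[f] - D(n)| ≤ (A/2)·(n-2)!, where D(n) is the derangement number. -/
theorem stmt_14 (n : ℕ) (f : Fin n → Fin n)
    (h2max : ∀ y : Fin n, (Finset.univ.filter fun i => f i = y).card ≤ 2)
    (A : ℕ)
    (hA : A = (Finset.univ.filter fun i : Fin n => ∃ j, j ≠ i ∧ f j = f i).card) :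
    |((Finset.univ.filter fun g : Equiv.Perm (Fin n) => ∀ i, g i ≠ f i).card : ℤ)
        - (numDerangements n : ℤ)|
      ≤ (A / 2) * Nat.factorial (n - 2) := by
  subst hA
  have h := abs_card_avoidingPerms_sub_numDerangements_le f h2max
  rw [Fintype.card_fin] at h
  unfold avoidingPerms collisionSet at h
  -- the statement decides `∀ i : Fin n` by `Nat.decidableForallFin`, hence `convert`
  convert h
end
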